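/- (Helicity conservation in ℝ³.) Let u : ℝ × ℝ³ → ℝ³ be smooth with ∂ₜu + (u·∇)u = −∇h for some continuously differentiable h : ℝ × ℝ³ → ℝ, and suppose there is R > 0 such that u(t,x) = 0 whenever ‖x‖ ≥ R. Then the helicity t ↦ ∫_{ℝ³} ⟨u(t,x), curl u(t,x)⟩ dx is constant. -/

import Mathlib

open scoped RealInnerProductSpace

/-- The curl of a vector field on `ℝ³`. -/
noncomputable def curl3 (w : EuclideanSpace ℝ (Fin 3) → EuclideanSpace ℝ (Fin 3))
    (x : EuclideanSpace ℝ (Fin 3)) : EuclideanSpace ℝ (Fin 3) :=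
  (WithLp.equiv 2 (Fin 3 → ℝ)).symm
    ![fderiv ℝ w x (EuclideanSpace.single 1 1) 2 - fderiv ℝ w x (EuclideanSpace.single 2 1) 1,
      fderiv ℝ w x (EuclideanSpace.single 2 1) 0 - fderiv ℝ w x (EuclideanSpace.single 0 1) 2,
      fderiv ℝ w x (EuclideanSpace.single 0 1) 1 - fderiv ℝ w x (EuclideanSpace.single 1 1) 0]

set_option linter.unusedSectionVars false

namespace HelicityAux

open MeasureTheory

noncomputable section

abbrev E3 : Type := EuclideanSpace ℝ (Fin 3)
abbrev e3 (i : Fin 3) : E3 := EuclideanSpace.single i 1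

variable {F : Type*} [NormedAddCommGroup F] [NormedSpace ℝ F]

/-! ### slice derivatives -/

lemma hasFDerivAt_slice {f : ℝ × E3 → F} {t : ℝ} {x : E3}
    (hf : DifferentiableAt ℝ f (t, x)) :
    HasFDerivAt (fun y => f (t, y))
      ((fderiv ℝ f (t, x)).comp ((0 : E3 →L[ℝ] ℝ).prod (ContinuousLinearMap.id ℝ E3))) x :=
  hf.hasFDerivAt.comp x (HasFDerivAt.prodMk (hasFDerivAt_const t x) (hasFDerivAt_id x))

lemma fderiv_slice {f : ℝ × E3 → F} {t : ℝ} {x : E3}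
    (hf : DifferentiableAt ℝ f (t, x)) (v : E3) :
    fderiv ℝ (fun y => f (t, y)) x v = fderiv ℝ f (t, x) (0, v) := by
  rw [(hasFDerivAt_slice hf).fderiv]
  simp

lemma hasDerivAt_slice {f : ℝ × E3 → F} {t : ℝ} {x : E3}
    (hf : DifferentiableAt ℝ f (t, x)) :
    HasDerivAt (fun τ => f (τ, x)) (fderiv ℝ f (t, x) (1, 0)) t := by
  have h := hf.hasFDerivAt.comp (f := fun τ => (τ, x)) t (HasFDerivAt.prodMk (hasFDerivAt_id t) (hasFDerivAt_const x t))
  have h2 := h.hasDerivAt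
  exact h2

lemma deriv_slice {f : ℝ × E3 → F} {t : ℝ} {x : E3}
    (hf : DifferentiableAt ℝ f (t, x)) :
    deriv (fun τ => f (τ, x)) t = fderiv ℝ f (t, x) (1, 0) :=
  (hasDerivAt_slice hf).deriv

/-! ### second derivatives of a smooth function -/

section smooth
variable {u : ℝ × E3 → E3} (hu : ContDiff ℝ (⊤ : ℕ∞) u)
include hu

lemma diff_u : Differentiable ℝ u := hu.differentiable (by simp)

lemma contDiff_Du : ContDiff ℝ (⊤ : ℕ∞) (fderiv ℝ u) :=
  (contDiff_infty_iff_fderiv.1 (hu.of_le (by simp))).2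

lemma diff_Du : Differentiable ℝ (fderiv ℝ u) :=
  (contDiff_Du hu).differentiable (by simp)

lemma D2_symm (z : ℝ × E3) (a b : ℝ × E3) :
    fderiv ℝ (fderiv ℝ u) z a b = fderiv ℝ (fderiv ℝ u) z b a :=
  second_derivative_symmetric (fun y => (diff_u hu y).hasFDerivAt)
    ((diff_Du hu z).hasFDerivAt) a b

lemma hasFDerivAt_Du_eval (t : ℝ) (x : E3) (v : ℝ × E3) :
    HasFDerivAt (fun y => fderiv ℝ u (t, y) v)
      (((ContinuousLinearMap.apply ℝ E3 v).comp (fderiv ℝ (fderiv ℝ u) (t, x))).comp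
        ((0 : E3 →L[ℝ] ℝ).prod (ContinuousLinearMap.id ℝ E3))) x := by
  have h1 : HasFDerivAt (fun p : ℝ × E3 => fderiv ℝ u p v)
      ((ContinuousLinearMap.apply ℝ E3 v).comp (fderiv ℝ (fderiv ℝ u) (t, x))) (t, x) :=
    (ContinuousLinearMap.apply ℝ E3 v).hasFDerivAt.comp _ (diff_Du hu _).hasFDerivAt
  exact h1.comp x (HasFDerivAt.prodMk (hasFDerivAt_const t x) (hasFDerivAt_id x))

lemma fderiv_Du_eval (t : ℝ) (x : E3) (v : ℝ × E3) (w : E3) :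
    fderiv ℝ (fun y => fderiv ℝ u (t, y) v) x w
      = fderiv ℝ (fderiv ℝ u) (t, x) (0, w) v := by
  rw [(hasFDerivAt_Du_eval hu t x v).fderiv]; simp

lemma hasDerivAt_Du_eval (t : ℝ) (x : E3) (v : ℝ × E3) :
    HasDerivAt (fun τ => fderiv ℝ u (τ, x) v)
      (fderiv ℝ (fderiv ℝ u) (t, x) (1, 0) v) t := by
  have h1 : HasFDerivAt (fun p : ℝ × E3 => fderiv ℝ u p v)
      ((ContinuousLinearMap.apply ℝ E3 v).comp (fderiv ℝ (fderiv ℝ u) (t, x))) (t, x) :=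
    (ContinuousLinearMap.apply ℝ E3 v).hasFDerivAt.comp _ (diff_Du hu _).hasFDerivAt
  have h2 := (h1.comp (f := fun τ => (τ, x)) t (HasFDerivAt.prodMk (hasFDerivAt_id t) (hasFDerivAt_const x t))).hasDerivAt
  exact h2

lemma diff_u_slice (t : ℝ) : Differentiable ℝ (fun y => u (t, y)) := fun x =>
  ((diff_u hu (t, x)).comp x (DifferentiableAt.prodMk (differentiableAt_const t) differentiableAt_id))

lemma cont_Du : Continuous (fderiv ℝ u) := (contDiff_Du hu).continuous

lemma cont_D2u : Continuous (fderiv ℝ (fderiv ℝ u)) :=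
  ((contDiff_infty_iff_fderiv.1 (contDiff_Du hu)).2).continuous

end smooth

/-! ### support lemmas -/

lemma vanish_of_vanish_gt {F : Type*} [NormedAddCommGroup F] {f : ℝ × E3 → F}
    (hf : Continuous f) {R : ℝ} (hR : 0 < R)
    (hv : ∀ τ (y : E3), R < ‖y‖ → f (τ, y) = 0) :
    ∀ τ (y : E3), R ≤ ‖y‖ → f (τ, y) = 0 := by
  intro τ y hy
  have hpos : 0 < ‖y‖ := lt_of_lt_of_le hR hy
  have hseq : Filter.Tendsto (fun n : ℕ => ((1 + 1 / (n + 1) : ℝ)) • y) Filter.atTop (nhds y) := by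
    have h1 : Filter.Tendsto (fun n : ℕ => (1 + 1 / (n + 1) : ℝ)) Filter.atTop (nhds 1) := by
      have h0 := tendsto_one_div_add_atTop_nhds_zero_nat (𝕜 := ℝ)
      have := (tendsto_const_nhds (x := (1:ℝ)) (f := Filter.atTop (α := ℕ))).add h0
      simpa using this
    simpa using h1.smul (tendsto_const_nhds (x := y) (f := Filter.atTop (α := ℕ)))
  have h0 : Filter.Tendsto (fun n : ℕ => f (τ, ((1 + 1 / (n + 1) : ℝ)) • y))
      Filter.atTop (nhds (f (τ, y))) :=
    ((hf.comp (continuous_const.prodMk continuous_id)).continuousAt.tendsto).comp hseq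
  have hzero : ∀ n : ℕ, f (τ, ((1 + 1 / (n + 1) : ℝ)) • y) = 0 := by
    intro n
    apply hv
    have hc : (1 : ℝ) < 1 + 1 / (n + 1) := by
      have : (0:ℝ) < 1 / (n + 1) := by positivity
      linarith
    have : ‖((1 + 1 / (n + 1) : ℝ)) • y‖ = (1 + 1 / (n + 1)) * ‖y‖ := by
      rw [norm_smul, Real.norm_eq_abs, abs_of_pos (by linarith)]
    rw [this]
    calc R ≤ ‖y‖ := hy
      _ = 1 * ‖y‖ := by ring
      _ < (1 + 1 / (n + 1)) * ‖y‖ := mul_lt_mul_of_pos_right hc hpos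
  exact tendsto_nhds_unique (h0.congr hzero) tendsto_const_nhds

lemma isOpen_far (R : ℝ) : IsOpen {p : ℝ × E3 | R < ‖p.2‖} :=
  isOpen_lt continuous_const (continuous_norm.comp continuous_snd)

lemma fderiv_vanish {F : Type*} [NormedAddCommGroup F] [NormedSpace ℝ F]
    {f : ℝ × E3 → F} {R : ℝ}
    (hv : ∀ τ (y : E3), R < ‖y‖ → f (τ, y) = 0) :
    ∀ τ (y : E3), R < ‖y‖ → fderiv ℝ f (τ, y) = 0 := by
  intro τ y hy
  have hmem : (τ, y) ∈ {p : ℝ × E3 | R < ‖p.2‖} := hy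
  have hev : f =ᶠ[nhds (τ, y)] (fun _ => (0 : F)) := by
    filter_upwards [(isOpen_far R).mem_nhds hmem] with p hp
    exact hv p.1 p.2 hp
  rw [hev.fderiv_eq, fderiv_fun_const]
  rfl

lemma hcs_of_vanish {f : E3 → ℝ} {R : ℝ}
    (hv : ∀ y : E3, R < ‖y‖ → f y = 0) : HasCompactSupport f := by
  apply HasCompactSupport.intro (isCompact_closedBall (0 : E3) R)
  intro y hy
  apply hv
  simpa [Metric.mem_closedBall, dist_zero_right, not_le] using hy

/-! ### integration by parts -/

lemma ibp {f g : E3 → ℝ} (v : E3)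
    (hf : Differentiable ℝ f) (hg : Differentiable ℝ g)
    (hf' : Continuous (fun x => fderiv ℝ f x v))
    (hg' : Continuous (fun x => fderiv ℝ g x v))
    (hgs : HasCompactSupport g) :
    ∫ x, fderiv ℝ f x v * g x = - ∫ x, f x * fderiv ℝ g x v := by
  have hgs' : HasCompactSupport (fun x => fderiv ℝ g x v) := hgs.fderiv_apply ℝ v
  have h1 : Integrable (fun x => fderiv ℝ f x v * g x) :=
    ((hf'.mul hg.continuous).integrable_of_hasCompactSupport (hgs.mul_left))
  have h2 : Integrable (fun x => f x * fderiv ℝ g x v) :=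
    ((hf.continuous.mul hg').integrable_of_hasCompactSupport (hgs'.mul_left))
  have h3 : Integrable (fun x => f x * g x) :=
    ((hf.continuous.mul hg.continuous).integrable_of_hasCompactSupport (hgs.mul_left))
  have := integral_mul_fderiv_eq_neg_fderiv_mul_of_integrable h1 h2 h3 (fun x _ => hf x) (fun x _ => hg x)
  linarith [this]

lemma ibp' {f g : E3 → ℝ} (v : E3)
    (hf : Differentiable ℝ f) (hg : Differentiable ℝ g)
    (hf' : Continuous (fun x => fderiv ℝ f x v))
    (hg' : Continuous (fun x => fderiv ℝ g x v))
    (hgs : HasCompactSupport g) :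
    ∫ x, f x * fderiv ℝ g x v = - ∫ x, fderiv ℝ f x v * g x := by
  have := ibp v hf hg hf' hg' hgs
  linarith [this]


/-! ### component functions of the velocity field -/

/-- `∂ⱼ uᵢ` at time `t` as a function of the space variable. -/
def da (u : ℝ × E3 → E3) (t : ℝ) (i j : Fin 3) : E3 → ℝ :=
  fun y => fderiv ℝ u (t, y) (0, e3 j) i

/-- `∂ₜ uᵢ` at time `t`. -/
def tb (u : ℝ × E3 → E3) (t : ℝ) (k : Fin 3) : E3 → ℝ :=
  fun y => fderiv ℝ u (t, y) (1, 0) k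

/-- components of vorticity. -/
def wv (u : ℝ × E3 → E3) (t : ℝ) (i : Fin 3) : E3 → ℝ :=
  ![fun y => da u t 2 1 y - da u t 1 2 y,
    fun y => da u t 0 2 y - da u t 2 0 y,
    fun y => da u t 1 0 y - da u t 0 1 y] i

section fixedu
variable {u : ℝ × E3 → E3} (hu : ContDiff ℝ (⊤ : ℕ∞) u)
include hu

lemma hasFDerivAt_davec (t : ℝ) (x : E3) (v : ℝ × E3) (i : Fin 3) :
    HasFDerivAt (fun y => fderiv ℝ u (t, y) v i)
      ((EuclideanSpace.proj i).comp
        ((((ContinuousLinearMap.apply ℝ E3 v).comp (fderiv ℝ (fderiv ℝ u) (t, x))).comp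
          ((0 : E3 →L[ℝ] ℝ).prod (ContinuousLinearMap.id ℝ E3))))) x := by
  exact (EuclideanSpace.proj (𝕜 := ℝ) i).hasFDerivAt.comp x (hasFDerivAt_Du_eval hu t x v)

lemma diff_da (t : ℝ) (i j : Fin 3) : Differentiable ℝ (da u t i j) := fun x =>
  (hasFDerivAt_davec hu t x (0, e3 j) i).differentiableAt

lemma diff_tb (t : ℝ) (k : Fin 3) : Differentiable ℝ (tb u t k) := fun x =>
  (hasFDerivAt_davec hu t x (1, 0) k).differentiableAt

lemma fderiv_da (t : ℝ) (i j : Fin 3) (x : E3) (v : E3) :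
    fderiv ℝ (da u t i j) x v = fderiv ℝ (fderiv ℝ u) (t, x) (0, v) (0, e3 j) i := by
  have h := (hasFDerivAt_davec hu t x (0, e3 j) i).fderiv
  show fderiv ℝ (fun y => fderiv ℝ u (t, y) (0, e3 j) i) x v = _
  rw [h]; simp

lemma fderiv_tb (t : ℝ) (k : Fin 3) (x : E3) (v : E3) :
    fderiv ℝ (tb u t k) x v = fderiv ℝ (fderiv ℝ u) (t, x) (0, v) (1, 0) k := by
  have h := (hasFDerivAt_davec hu t x (1, 0) k).fderiv
  show fderiv ℝ (fun y => fderiv ℝ u (t, y) (1, 0) k) x v = _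
  rw [h]; simp

lemma cont_Duvec (t : ℝ) (v : ℝ × E3) (i : Fin 3) :
    Continuous (fun y : E3 => fderiv ℝ u (t, y) v i) := by
  have h1 : Continuous fun y : E3 => fderiv ℝ u (t, y) :=
    (cont_Du hu).comp (continuous_const.prodMk continuous_id)
  exact (EuclideanSpace.proj i).continuous.comp
    ((ContinuousLinearMap.apply ℝ E3 v).continuous.comp h1)

lemma cont_da (t : ℝ) (i j : Fin 3) : Continuous (da u t i j) := cont_Duvec hu t _ i

lemma cont_tb (t : ℝ) (k : Fin 3) : Continuous (tb u t k) := cont_Duvec hu t _ k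

lemma cont_D2uvec (t : ℝ) (v w : ℝ × E3) (i : Fin 3) :
    Continuous (fun y : E3 => fderiv ℝ (fderiv ℝ u) (t, y) v w i) := by
  have h1 : Continuous fun y : E3 => fderiv ℝ (fderiv ℝ u) (t, y) :=
    (cont_D2u hu).comp (continuous_const.prodMk continuous_id)
  exact (EuclideanSpace.proj i).continuous.comp
    ((ContinuousLinearMap.apply ℝ E3 w).continuous.comp
      ((ContinuousLinearMap.apply ℝ (ℝ × E3 →L[ℝ] E3) v).continuous.comp h1))

lemma diff_wv (t : ℝ) (i : Fin 3) : Differentiable ℝ (wv u t i) := by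
  fin_cases i <;>
    · show Differentiable ℝ (fun y => da u t _ _ y - da u t _ _ y)
      exact (diff_da hu t _ _).sub (diff_da hu t _ _)

lemma cont_wv (t : ℝ) (i : Fin 3) : Continuous (wv u t i) := by
  fin_cases i <;>
    · show Continuous (fun y => da u t _ _ y - da u t _ _ y)
      exact (cont_da hu t _ _).sub (cont_da hu t _ _)

lemma fderiv_wv0 (t : ℝ) (x : E3) (v : E3) :
    fderiv ℝ (wv u t 0) x v
      = fderiv ℝ (fderiv ℝ u) (t, x) (0, v) (0, e3 1) 2
        - fderiv ℝ (fderiv ℝ u) (t, x) (0, v) (0, e3 2) 1 := by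
  show fderiv ℝ (fun y => da u t 2 1 y - da u t 1 2 y) x v = _
  rw [fderiv_fun_sub ((diff_da hu t 2 1) x) ((diff_da hu t 1 2) x)]
  simp [fderiv_da hu]

lemma fderiv_wv1 (t : ℝ) (x : E3) (v : E3) :
    fderiv ℝ (wv u t 1) x v
      = fderiv ℝ (fderiv ℝ u) (t, x) (0, v) (0, e3 2) 0
        - fderiv ℝ (fderiv ℝ u) (t, x) (0, v) (0, e3 0) 2 := by
  show fderiv ℝ (fun y => da u t 0 2 y - da u t 2 0 y) x v = _
  rw [fderiv_fun_sub ((diff_da hu t 0 2) x) ((diff_da hu t 2 0) x)]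
  simp [fderiv_da hu]

lemma fderiv_wv2 (t : ℝ) (x : E3) (v : E3) :
    fderiv ℝ (wv u t 2) x v
      = fderiv ℝ (fderiv ℝ u) (t, x) (0, v) (0, e3 0) 1
        - fderiv ℝ (fderiv ℝ u) (t, x) (0, v) (0, e3 1) 0 := by
  show fderiv ℝ (fun y => da u t 1 0 y - da u t 0 1 y) x v = _
  rw [fderiv_fun_sub ((diff_da hu t 1 0) x) ((diff_da hu t 0 1) x)]
  simp [fderiv_da hu]

lemma cont_fderiv_wv (t : ℝ) (i : Fin 3) (v : E3) :
    Continuous (fun x => fderiv ℝ (wv u t i) x v) := by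
  fin_cases i
  · exact Continuous.congr
      ((cont_D2uvec hu t (0, v) (0, e3 1) 2).sub (cont_D2uvec hu t (0, v) (0, e3 2) 1))
      (fun x => (fderiv_wv0 hu t x v).symm)
  · exact Continuous.congr
      ((cont_D2uvec hu t (0, v) (0, e3 2) 0).sub (cont_D2uvec hu t (0, v) (0, e3 0) 2))
      (fun x => (fderiv_wv1 hu t x v).symm)
  · exact Continuous.congr
      ((cont_D2uvec hu t (0, v) (0, e3 0) 1).sub (cont_D2uvec hu t (0, v) (0, e3 1) 0))
      (fun x => (fderiv_wv2 hu t x v).symm)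

lemma cont_fderiv_da (t : ℝ) (i j : Fin 3) (v : E3) :
    Continuous (fun x => fderiv ℝ (da u t i j) x v) :=
  Continuous.congr (cont_D2uvec hu t (0, v) (0, e3 j) i)
    (fun x => (fderiv_da hu t i j x v).symm)

lemma cont_fderiv_tb (t : ℝ) (k : Fin 3) (v : E3) :
    Continuous (fun x => fderiv ℝ (tb u t k) x v) :=
  Continuous.congr (cont_D2uvec hu t (0, v) (1, 0) k)
    (fun x => (fderiv_tb hu t k x v).symm)

/-- divergence of vorticity vanishes -/
lemma div_wv (t : ℝ) (x : E3) :
    fderiv ℝ (wv u t 0) x (e3 0) + fderiv ℝ (wv u t 1) x (e3 1)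
      + fderiv ℝ (wv u t 2) x (e3 2) = 0 := by
  rw [fderiv_wv0 hu, fderiv_wv1 hu, fderiv_wv2 hu]
  have s01 := D2_symm hu (t, x) (0, e3 0) (0, e3 1)
  have s02 := D2_symm hu (t, x) (0, e3 0) (0, e3 2)
  have s12 := D2_symm hu (t, x) (0, e3 1) (0, e3 2)
  have c2 := congrArg (fun z : E3 => z 2) s01
  have c1 := congrArg (fun z : E3 => z 1) s02
  have c0 := congrArg (fun z : E3 => z 0) s12
  simp only at c0 c1 c2
  linarith


section supp
variable {R : ℝ} (hR : 0 < R)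
  (hsupp : ∀ (t : ℝ) (x : E3), R ≤ ‖x‖ → u (t, x) = 0)
include hsupp

lemma Du_vanish : ∀ (t : ℝ) (y : E3), R < ‖y‖ → fderiv ℝ u (t, y) = 0 :=
  fderiv_vanish (fun τ y hy => hsupp τ y hy.le)

lemma D2u_vanish : ∀ (t : ℝ) (y : E3), R < ‖y‖ → fderiv ℝ (fderiv ℝ u) (t, y) = 0 :=
  fderiv_vanish (fun τ y hy => Du_vanish hu hsupp τ y hy)

lemma hcs_a (t : ℝ) (i : Fin 3) : HasCompactSupport (fun y => u (t, y) i) :=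
  hcs_of_vanish (R := R) (fun y hy => by rw [hsupp t y hy.le]; rfl)

lemma hcs_da (t : ℝ) (i j : Fin 3) : HasCompactSupport (da u t i j) :=
  hcs_of_vanish (R := R) (fun y hy => by
    show fderiv ℝ u (t, y) (0, e3 j) i = 0
    rw [Du_vanish hu hsupp t y hy]; rfl)

lemma hcs_tb (t : ℝ) (k : Fin 3) : HasCompactSupport (tb u t k) :=
  hcs_of_vanish (R := R) (fun y hy => by
    show fderiv ℝ u (t, y) (1, 0) k = 0
    rw [Du_vanish hu hsupp t y hy]; rfl)

lemma hcs_wv (t : ℝ) (i : Fin 3) : HasCompactSupport (wv u t i) := by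
  fin_cases i <;>
    · refine hcs_of_vanish (R := R) (fun y hy => ?_)
      show da u t _ _ y - da u t _ _ y = 0
      unfold da
      rw [Du_vanish hu hsupp t y hy]
      simp

/-- The key integral identity: pairing a gradient against the vorticity integrates to zero. -/
lemma key {f : E3 → ℝ} (t : ℝ)
    (hf : Differentiable ℝ f)
    (hf' : ∀ v : E3, Continuous (fun x => fderiv ℝ f x v)) :
    ∫ x, (fderiv ℝ f x (e3 0) * wv u t 0 x + fderiv ℝ f x (e3 1) * wv u t 1 x
      + fderiv ℝ f x (e3 2) * wv u t 2 x) = 0 := by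
  have hint : ∀ i : Fin 3, Integrable (fun x => fderiv ℝ f x (e3 i) * wv u t i x) :=
    fun i => ((hf' (e3 i)).mul (cont_wv hu t i)).integrable_of_hasCompactSupport
      ((hcs_wv hu hsupp t i).mul_left)
  have hAB : Integrable (fun x => fderiv ℝ f x (e3 0) * wv u t 0 x
      + fderiv ℝ f x (e3 1) * wv u t 1 x) := (hint 0).add (hint 1)
  rw [integral_add hAB (hint 2), integral_add (hint 0) (hint 1)]
  have e0 := ibp (e3 0) hf (diff_wv hu t 0) (hf' (e3 0)) (cont_fderiv_wv hu t 0 (e3 0))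
    (hcs_wv hu hsupp t 0)
  have e1 := ibp (e3 1) hf (diff_wv hu t 1) (hf' (e3 1)) (cont_fderiv_wv hu t 1 (e3 1))
    (hcs_wv hu hsupp t 1)
  have e2 := ibp (e3 2) hf (diff_wv hu t 2) (hf' (e3 2)) (cont_fderiv_wv hu t 2 (e3 2))
    (hcs_wv hu hsupp t 2)
  rw [e0, e1, e2]
  have hint2 : ∀ i : Fin 3, Integrable (fun x => f x * fderiv ℝ (wv u t i) x (e3 i)) := by
    intro i
    refine (hf.continuous.mul (cont_fderiv_wv hu t i (e3 i))).integrable_of_hasCompactSupport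
      (HasCompactSupport.mul_left ?_)
    exact (hcs_wv hu hsupp t i).fderiv_apply ℝ (e3 i)
  have : (∫ x, f x * fderiv ℝ (wv u t 0) x (e3 0)) + (∫ x, f x * fderiv ℝ (wv u t 1) x (e3 1))
      + (∫ x, f x * fderiv ℝ (wv u t 2) x (e3 2)) = 0 := by
    have hAB2 : Integrable (fun x => f x * fderiv ℝ (wv u t 0) x (e3 0)
        + f x * fderiv ℝ (wv u t 1) x (e3 1)) := (hint2 0).add (hint2 1)
    rw [← integral_add (hint2 0) (hint2 1), ← integral_add hAB2 (hint2 2)]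
    have : ∀ x : E3, f x * fderiv ℝ (wv u t 0) x (e3 0) + f x * fderiv ℝ (wv u t 1) x (e3 1)
        + f x * fderiv ℝ (wv u t 2) x (e3 2) = 0 := by
      intro x
      have hd := div_wv hu t x
      have : f x * fderiv ℝ (wv u t 0) x (e3 0) + f x * fderiv ℝ (wv u t 1) x (e3 1)
          + f x * fderiv ℝ (wv u t 2) x (e3 2)
          = f x * (fderiv ℝ (wv u t 0) x (e3 0) + fderiv ℝ (wv u t 1) x (e3 1)
            + fderiv ℝ (wv u t 2) x (e3 2)) := by ring
      rw [this, hd, mul_zero]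
    simp only [this, integral_zero]
  linarith [this]

end supp

end fixedu


/-! ### the integrand and its time derivative kernel -/

/-- components of `u` at time `t`. -/
def av (u : ℝ × E3 → E3) (t : ℝ) (i : Fin 3) : E3 → ℝ := fun y => u (t, y) i

/-- the helicity integrand `⟨u, curl u⟩` in coordinates. -/
def hel (u : ℝ × E3 → E3) (t : ℝ) (x : E3) : ℝ :=
  av u t 0 x * wv u t 0 x + av u t 1 x * wv u t 1 x + av u t 2 x * wv u t 2 x

/-- the time derivative of the helicity integrand. -/
def gker (u : ℝ × E3 → E3) (t : ℝ) (x : E3) : ℝ :=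
  (tb u t 0 x * wv u t 0 x + tb u t 1 x * wv u t 1 x + tb u t 2 x * wv u t 2 x)
  + (av u t 0 x * (fderiv ℝ (tb u t 2) x (e3 1) - fderiv ℝ (tb u t 1) x (e3 2))
    + av u t 1 x * (fderiv ℝ (tb u t 0) x (e3 2) - fderiv ℝ (tb u t 2) x (e3 0))
    + av u t 2 x * (fderiv ℝ (tb u t 1) x (e3 0) - fderiv ℝ (tb u t 0) x (e3 1)))

section fixedu2
variable {u : ℝ × E3 → E3} (hu : ContDiff ℝ (⊤ : ℕ∞) u)
include hu

lemma hasFDerivAt_av (t : ℝ) (i : Fin 3) (x : E3) :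
    HasFDerivAt (av u t i)
      ((EuclideanSpace.proj i).comp
        ((fderiv ℝ u (t, x)).comp ((0 : E3 →L[ℝ] ℝ).prod (ContinuousLinearMap.id ℝ E3)))) x := by
  exact (EuclideanSpace.proj (𝕜 := ℝ) i).hasFDerivAt.comp x
    (hasFDerivAt_slice (diff_u hu (t, x)))

lemma diff_av (t : ℝ) (i : Fin 3) : Differentiable ℝ (av u t i) := fun x =>
  (hasFDerivAt_av hu t i x).differentiableAt

lemma fderiv_av (t : ℝ) (i : Fin 3) (x : E3) (v : E3) :
    fderiv ℝ (av u t i) x v = fderiv ℝ u (t, x) (0, v) i := by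
  rw [(hasFDerivAt_av hu t i x).fderiv]; simp

lemma fderiv_av_da (t : ℝ) (i j : Fin 3) (x : E3) :
    fderiv ℝ (av u t i) x (e3 j) = da u t i j x := fderiv_av hu t i x (e3 j)

lemma cont_av (t : ℝ) (i : Fin 3) : Continuous (av u t i) := by
  have : Continuous fun y : E3 => u (t, y) :=
    hu.continuous.comp (continuous_const.prodMk continuous_id)
  exact (EuclideanSpace.proj (𝕜 := ℝ) i).continuous.comp this

lemma cont_fderiv_av (t : ℝ) (i : Fin 3) (v : E3) :
    Continuous (fun x => fderiv ℝ (av u t i) x v) :=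
  Continuous.congr (cont_Duvec hu t (0, v) i) (fun x => (fderiv_av hu t i x v).symm)

/-- `∫ (f g' + f' g) = 0` when `g` is compactly supported. -/
lemma ibp0 {f g : E3 → ℝ} (v : E3)
    (hf : Differentiable ℝ f) (hg : Differentiable ℝ g)
    (hf' : Continuous (fun x => fderiv ℝ f x v))
    (hg' : Continuous (fun x => fderiv ℝ g x v))
    (hgs : HasCompactSupport g) :
    ∫ x, (f x * fderiv ℝ g x v + fderiv ℝ f x v * g x) = 0 := by
  have h1 : Integrable (fun x => f x * fderiv ℝ g x v) :=
    (hf.continuous.mul hg').integrable_of_hasCompactSupport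
      ((hgs.fderiv_apply ℝ v).mul_left)
  have h2 : Integrable (fun x => fderiv ℝ f x v * g x) :=
    (hf'.mul hg.continuous).integrable_of_hasCompactSupport (hgs.mul_left)
  rw [integral_add h1 h2, ibp' v hf hg hf' hg' hgs]
  ring

end fixedu2


/-- half of `|u|²` (without the half). -/
def qf (u : ℝ × E3 → E3) (t : ℝ) : E3 → ℝ := fun y =>
  av u t 0 y * av u t 0 y + av u t 1 y * av u t 1 y + av u t 2 y * av u t 2 y

section main
variable {u : ℝ × E3 → E3} (hu : ContDiff ℝ (⊤ : ℕ∞) u)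
  {h : ℝ × E3 → ℝ} (hh : ContDiff ℝ 1 h)
  (euler : ∀ (t : ℝ) (x : E3),
      deriv (fun τ => u (τ, x)) t + fderiv ℝ (fun y => u (t, y)) x (u (t, x))
        = -gradient (fun y => h (t, y)) x)
  {R : ℝ} (hR : 0 < R)
  (hsupp : ∀ (t : ℝ) (x : E3), R ≤ ‖x‖ → u (t, x) = 0)

lemma grad_comp (f : E3 → ℝ) (x : E3) (k : Fin 3) :
    gradient f x k = fderiv ℝ f x (e3 k) := by
  have h1 : fderiv ℝ f x (e3 k) = inner ℝ (gradient f x) (e3 k) := by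
    rw [gradient]
    rw [← InnerProductSpace.toDual_apply_apply]
    rw [(InnerProductSpace.toDual ℝ E3).apply_symm_apply]
  rw [h1]
  simp only [e3, EuclideanSpace.inner_single_right]; simp

include hu euler hh in
/-- Euler's equation in coordinates. -/
lemma comp_euler (t : ℝ) (x : E3) (k : Fin 3) :
    tb u t k x = -(av u t 0 x * da u t k 0 x + av u t 1 x * da u t k 1 x
      + av u t 2 x * da u t k 2 x) - fderiv ℝ (fun y => h (t, y)) x (e3 k) := by
  have he := euler t x
  have h1 : deriv (fun τ => u (τ, x)) t = fderiv ℝ u (t, x) (1, 0) :=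
    deriv_slice (diff_u hu (t, x))
  have h2 : fderiv ℝ (fun y => u (t, y)) x (u (t, x)) = fderiv ℝ u (t, x) (0, u (t, x)) :=
    fderiv_slice (diff_u hu (t, x)) _
  have h3 : ((0 : ℝ), u (t, x)) = av u t 0 x • ((0 : ℝ), e3 0) + av u t 1 x • ((0 : ℝ), e3 1)
      + av u t 2 x • ((0 : ℝ), e3 2) := by
    have hdec : u (t, x) = av u t 0 x • e3 0 + av u t 1 x • e3 1 + av u t 2 x • e3 2 := by
      apply PiLp.ext
      intro i
      fin_cases i <;>
        simp [av, e3, EuclideanSpace.single_apply, PiLp.add_apply, PiLp.smul_apply]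
    rw [Prod.ext_iff]
    constructor
    · simp
    · simpa using hdec
  rw [h1, h2, h3] at he
  simp only [map_add, _root_.map_smul] at he
  have hk := congrArg (fun z : E3 => z k) he
  simp only [PiLp.add_apply, PiLp.smul_apply, PiLp.neg_apply, smul_eq_mul] at hk
  have h4 : gradient (fun y => h (t, y)) x k = fderiv ℝ (fun y => h (t, y)) x (e3 k) :=
    grad_comp _ x k
  rw [h4] at hk
  show fderiv ℝ u (t, x) (1, 0) k = _
  show _ = -(av u t 0 x * fderiv ℝ u (t, x) (0, e3 0) k
    + av u t 1 x * fderiv ℝ u (t, x) (0, e3 1) k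
    + av u t 2 x * fderiv ℝ u (t, x) (0, e3 2) k) - fderiv ℝ (fun y => h (t, y)) x (e3 k)
  linarith [hk]

include hu in
lemma diff_qf (t : ℝ) : Differentiable ℝ (qf u t) := by
  unfold qf
  exact (((diff_av hu t 0).mul (diff_av hu t 0)).add
    ((diff_av hu t 1).mul (diff_av hu t 1))).add ((diff_av hu t 2).mul (diff_av hu t 2))

include hu in
lemma fderiv_qf (t : ℝ) (x : E3) (v : E3) :
    fderiv ℝ (qf u t) x v
      = 2 * (av u t 0 x * fderiv ℝ u (t, x) (0, v) 0)
        + 2 * (av u t 1 x * fderiv ℝ u (t, x) (0, v) 1)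
        + 2 * (av u t 2 x * fderiv ℝ u (t, x) (0, v) 2) := by
  have H : HasFDerivAt (qf u t)
      ((((av u t 0 x • fderiv ℝ (av u t 0) x + av u t 0 x • fderiv ℝ (av u t 0) x)
        + (av u t 1 x • fderiv ℝ (av u t 1) x + av u t 1 x • fderiv ℝ (av u t 1) x))
        + (av u t 2 x • fderiv ℝ (av u t 2) x + av u t 2 x • fderiv ℝ (av u t 2) x))) x := by
    have h0 := ((diff_av hu t 0) x).hasFDerivAt
    have h1' := ((diff_av hu t 1) x).hasFDerivAt
    have h2' := ((diff_av hu t 2) x).hasFDerivAt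
    exact ((h0.mul h0).add (h1'.mul h1')).add (h2'.mul h2')
  rw [H.fderiv]
  simp only [ContinuousLinearMap.add_apply, ContinuousLinearMap.smul_apply, smul_eq_mul,
    fderiv_av hu]
  ring

include hu in
lemma cont_fderiv_qf (t : ℝ) (v : E3) :
    Continuous (fun x => fderiv ℝ (qf u t) x v) := by
  have hc : Continuous (fun x : E3 =>
      2 * (av u t 0 x * fderiv ℝ u (t, x) (0, v) 0)
        + 2 * (av u t 1 x * fderiv ℝ u (t, x) (0, v) 1)
        + 2 * (av u t 2 x * fderiv ℝ u (t, x) (0, v) 2)) := by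
    refine Continuous.add (Continuous.add ?_ ?_) ?_ <;>
      exact (continuous_const.mul ((cont_av hu t _).mul (cont_Duvec hu t (0, v) _)))
  exact Continuous.congr hc (fun x => (fderiv_qf hu t x v).symm)

include hh in
lemma contslice_h (t : ℝ) : ContDiff ℝ 1 (fun y => h (t, y)) :=
  hh.comp (contDiff_const.prodMk contDiff_id)

include hh in
lemma diff_h_slice (t : ℝ) : Differentiable ℝ (fun y => h (t, y)) :=
  (contslice_h hh t).differentiable one_ne_zero

include hh in
lemma cont_fderiv_h_slice (t : ℝ) (v : E3) :
    Continuous (fun x => fderiv ℝ (fun y => h (t, y)) x v) := by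
  have h1 : Continuous (fderiv ℝ (fun y => h (t, y))) :=
    (contslice_h hh t).continuous_fderiv one_ne_zero
  exact (ContinuousLinearMap.apply ℝ ℝ v).continuous.comp h1

include hu hh euler hR hsupp in
lemma int_B_zero (t : ℝ) :
    ∫ x, (tb u t 0 x * wv u t 0 x + tb u t 1 x * wv u t 1 x + tb u t 2 x * wv u t 2 x) = 0 := by
  -- rewrite using Euler's equation
  have hBpoint : ∀ x : E3,
      tb u t 0 x * wv u t 0 x + tb u t 1 x * wv u t 1 x + tb u t 2 x * wv u t 2 x
      = -((1/2 : ℝ) * (fderiv ℝ (qf u t) x (e3 0) * wv u t 0 x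
            + fderiv ℝ (qf u t) x (e3 1) * wv u t 1 x
            + fderiv ℝ (qf u t) x (e3 2) * wv u t 2 x))
        - (fderiv ℝ (fun y => h (t, y)) x (e3 0) * wv u t 0 x
            + fderiv ℝ (fun y => h (t, y)) x (e3 1) * wv u t 1 x
            + fderiv ℝ (fun y => h (t, y)) x (e3 2) * wv u t 2 x) := by
    intro x
    rw [comp_euler hu hh euler t x 0, comp_euler hu hh euler t x 1, comp_euler hu hh euler t x 2,
      fderiv_qf hu t x (e3 0), fderiv_qf hu t x (e3 1), fderiv_qf hu t x (e3 2)]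
    show _ = -((1/2 : ℝ) * ((2 * (av u t 0 x * da u t 0 0 x) + 2 * (av u t 1 x * da u t 1 0 x)
        + 2 * (av u t 2 x * da u t 2 0 x)) * wv u t 0 x
      + (2 * (av u t 0 x * da u t 0 1 x) + 2 * (av u t 1 x * da u t 1 1 x)
        + 2 * (av u t 2 x * da u t 2 1 x)) * wv u t 1 x
      + (2 * (av u t 0 x * da u t 0 2 x) + 2 * (av u t 1 x * da u t 1 2 x)
        + 2 * (av u t 2 x * da u t 2 2 x)) * wv u t 2 x)) - _
    have hw0 : wv u t 0 x = da u t 2 1 x - da u t 1 2 x := rfl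
    have hw1 : wv u t 1 x = da u t 0 2 x - da u t 2 0 x := rfl
    have hw2 : wv u t 2 x = da u t 1 0 x - da u t 0 1 x := rfl
    rw [hw0, hw1, hw2]
    ring
  have hfun := funext hBpoint
  rw [hfun]
  -- split the integral
  have hS1int : Integrable (fun x => (1/2 : ℝ) * (fderiv ℝ (qf u t) x (e3 0) * wv u t 0 x
      + fderiv ℝ (qf u t) x (e3 1) * wv u t 1 x
      + fderiv ℝ (qf u t) x (e3 2) * wv u t 2 x)) := by
    apply Continuous.integrable_of_hasCompactSupport
    · exact continuous_const.mul (((((cont_fderiv_qf hu t (e3 0)).mul (cont_wv hu t 0)).add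
        ((cont_fderiv_qf hu t (e3 1)).mul (cont_wv hu t 1))).add
        ((cont_fderiv_qf hu t (e3 2)).mul (cont_wv hu t 2))))
    · exact ((((hcs_wv hu hsupp t 0).mul_left).add ((hcs_wv hu hsupp t 1).mul_left)).add
        ((hcs_wv hu hsupp t 2).mul_left)).mul_left
  have hS2int : Integrable (fun x => (fderiv ℝ (fun y => h (t, y)) x (e3 0) * wv u t 0 x
      + fderiv ℝ (fun y => h (t, y)) x (e3 1) * wv u t 1 x
      + fderiv ℝ (fun y => h (t, y)) x (e3 2) * wv u t 2 x)) := by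
    apply Continuous.integrable_of_hasCompactSupport
    · exact ((((cont_fderiv_h_slice hh t (e3 0)).mul (cont_wv hu t 0)).add
        ((cont_fderiv_h_slice hh t (e3 1)).mul (cont_wv hu t 1))).add
        ((cont_fderiv_h_slice hh t (e3 2)).mul (cont_wv hu t 2)))
    · exact (((hcs_wv hu hsupp t 0).mul_left).add ((hcs_wv hu hsupp t 1).mul_left)).add
        ((hcs_wv hu hsupp t 2).mul_left)
  have hS1neg : Integrable (fun x => -((1/2 : ℝ) * (fderiv ℝ (qf u t) x (e3 0) * wv u t 0 x
      + fderiv ℝ (qf u t) x (e3 1) * wv u t 1 x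
      + fderiv ℝ (qf u t) x (e3 2) * wv u t 2 x))) := hS1int.neg
  rw [integral_sub hS1neg hS2int]
  rw [integral_neg, MeasureTheory.integral_const_mul]
  rw [key hu hsupp t (diff_qf hu t) (fun v => cont_fderiv_qf hu t v)]
  rw [key hu hsupp t (diff_h_slice hh t) (fun v => cont_fderiv_h_slice hh t v)]
  simp

include hu hh euler hR hsupp in
lemma int_gker_zero (t : ℝ) : ∫ x, gker u t x = 0 := by
  have hcs_av' : ∀ i : Fin 3, HasCompactSupport (av u t i) := fun i => hcs_a hu hsupp t i
  have iBint : Integrable (fun x => tb u t 0 x * wv u t 0 x + tb u t 1 x * wv u t 1 x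
      + tb u t 2 x * wv u t 2 x) := by
    refine Integrable.add (Integrable.add ?_ ?_) ?_ <;>
      exact ((cont_tb hu t _).mul (cont_wv hu t _)).integrable_of_hasCompactSupport
        ((hcs_wv hu hsupp t _).mul_left)
  have iCone : ∀ i k k' j j' : Fin 3, Integrable (fun x => av u t i x
      * (fderiv ℝ (tb u t k) x (e3 j) - fderiv ℝ (tb u t k') x (e3 j'))) := by
    intro i k k' j j'
    refine Continuous.integrable_of_hasCompactSupport ?_ ((hcs_av' i).mul_right)
    exact (cont_av hu t i).mul ((cont_fderiv_tb hu t k (e3 j)).sub (cont_fderiv_tb hu t k' (e3 j')))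
  have iCint : Integrable (fun x =>
      av u t 0 x * (fderiv ℝ (tb u t 2) x (e3 1) - fderiv ℝ (tb u t 1) x (e3 2))
      + av u t 1 x * (fderiv ℝ (tb u t 0) x (e3 2) - fderiv ℝ (tb u t 2) x (e3 0))
      + av u t 2 x * (fderiv ℝ (tb u t 1) x (e3 0) - fderiv ℝ (tb u t 0) x (e3 1))) :=
    ((iCone 0 2 1 1 2).add (iCone 1 0 2 2 0)).add (iCone 2 1 0 0 1)
  have hsplit : ∫ x, gker u t x
      = (∫ x, (tb u t 0 x * wv u t 0 x + tb u t 1 x * wv u t 1 x + tb u t 2 x * wv u t 2 x))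
      + ∫ x, (av u t 0 x * (fderiv ℝ (tb u t 2) x (e3 1) - fderiv ℝ (tb u t 1) x (e3 2))
          + av u t 1 x * (fderiv ℝ (tb u t 0) x (e3 2) - fderiv ℝ (tb u t 2) x (e3 0))
          + av u t 2 x * (fderiv ℝ (tb u t 1) x (e3 0) - fderiv ℝ (tb u t 0) x (e3 1))) := by
    simp only [gker]
    exact integral_add iBint iCint
  -- the six integration-by-parts identities
  have iPint : ∀ i k j : Fin 3, Integrable (fun x => av u t i x * fderiv ℝ (tb u t k) x (e3 j)
      + fderiv ℝ (av u t i) x (e3 j) * tb u t k x) := by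
    intro i k j
    refine Integrable.add ?_ ?_
    · exact ((cont_av hu t i).mul (cont_fderiv_tb hu t k (e3 j))).integrable_of_hasCompactSupport
        ((hcs_av' i).mul_right)
    · exact ((cont_fderiv_av hu t i (e3 j)).mul (cont_tb hu t k)).integrable_of_hasCompactSupport
        ((hcs_tb hu hsupp t k).mul_left)
  have iZ : ∀ i k j : Fin 3, ∫ x, (av u t i x * fderiv ℝ (tb u t k) x (e3 j)
      + fderiv ℝ (av u t i) x (e3 j) * tb u t k x) = 0 := fun i k j =>
    ibp0 hu (e3 j) (diff_av hu t i) (diff_tb hu t k) (cont_fderiv_av hu t i (e3 j))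
      (cont_fderiv_tb hu t k (e3 j)) (hcs_tb hu hsupp t k)
  -- C - B = sum of the six ibp kernels
  have hpoint : ∀ x : E3,
      (av u t 0 x * (fderiv ℝ (tb u t 2) x (e3 1) - fderiv ℝ (tb u t 1) x (e3 2))
        + av u t 1 x * (fderiv ℝ (tb u t 0) x (e3 2) - fderiv ℝ (tb u t 2) x (e3 0))
        + av u t 2 x * (fderiv ℝ (tb u t 1) x (e3 0) - fderiv ℝ (tb u t 0) x (e3 1)))
      - (tb u t 0 x * wv u t 0 x + tb u t 1 x * wv u t 1 x + tb u t 2 x * wv u t 2 x)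
      = (((((av u t 0 x * fderiv ℝ (tb u t 2) x (e3 1) + fderiv ℝ (av u t 0) x (e3 1) * tb u t 2 x)
        - (av u t 0 x * fderiv ℝ (tb u t 1) x (e3 2) + fderiv ℝ (av u t 0) x (e3 2) * tb u t 1 x))
        + (av u t 1 x * fderiv ℝ (tb u t 0) x (e3 2) + fderiv ℝ (av u t 1) x (e3 2) * tb u t 0 x))
        - (av u t 1 x * fderiv ℝ (tb u t 2) x (e3 0) + fderiv ℝ (av u t 1) x (e3 0) * tb u t 2 x))
        + (av u t 2 x * fderiv ℝ (tb u t 1) x (e3 0) + fderiv ℝ (av u t 2) x (e3 0) * tb u t 1 x))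
        - (av u t 2 x * fderiv ℝ (tb u t 0) x (e3 1) + fderiv ℝ (av u t 2) x (e3 1) * tb u t 0 x) := by
    intro x
    have hw0 : wv u t 0 x = da u t 2 1 x - da u t 1 2 x := rfl
    have hw1 : wv u t 1 x = da u t 0 2 x - da u t 2 0 x := rfl
    have hw2 : wv u t 2 x = da u t 1 0 x - da u t 0 1 x := rfl
    rw [hw0, hw1, hw2, fderiv_av_da hu, fderiv_av_da hu, fderiv_av_da hu, fderiv_av_da hu,
      fderiv_av_da hu, fderiv_av_da hu]
    ring
  have j2 : Integrable (fun x =>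
      (av u t 0 x * fderiv ℝ (tb u t 2) x (e3 1) + fderiv ℝ (av u t 0) x (e3 1) * tb u t 2 x)
      - (av u t 0 x * fderiv ℝ (tb u t 1) x (e3 2) + fderiv ℝ (av u t 0) x (e3 2) * tb u t 1 x)) :=
    (iPint 0 2 1).sub (iPint 0 1 2)
  have j3 : Integrable (fun x =>
      ((av u t 0 x * fderiv ℝ (tb u t 2) x (e3 1) + fderiv ℝ (av u t 0) x (e3 1) * tb u t 2 x)
      - (av u t 0 x * fderiv ℝ (tb u t 1) x (e3 2) + fderiv ℝ (av u t 0) x (e3 2) * tb u t 1 x))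
      + (av u t 1 x * fderiv ℝ (tb u t 0) x (e3 2) + fderiv ℝ (av u t 1) x (e3 2) * tb u t 0 x)) :=
    j2.add (iPint 1 0 2)
  have j4 : Integrable (fun x =>
      (((av u t 0 x * fderiv ℝ (tb u t 2) x (e3 1) + fderiv ℝ (av u t 0) x (e3 1) * tb u t 2 x)
      - (av u t 0 x * fderiv ℝ (tb u t 1) x (e3 2) + fderiv ℝ (av u t 0) x (e3 2) * tb u t 1 x))
      + (av u t 1 x * fderiv ℝ (tb u t 0) x (e3 2) + fderiv ℝ (av u t 1) x (e3 2) * tb u t 0 x))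
      - (av u t 1 x * fderiv ℝ (tb u t 2) x (e3 0) + fderiv ℝ (av u t 1) x (e3 0) * tb u t 2 x)) :=
    j3.sub (iPint 1 2 0)
  have j5 : Integrable (fun x =>
      ((((av u t 0 x * fderiv ℝ (tb u t 2) x (e3 1) + fderiv ℝ (av u t 0) x (e3 1) * tb u t 2 x)
      - (av u t 0 x * fderiv ℝ (tb u t 1) x (e3 2) + fderiv ℝ (av u t 0) x (e3 2) * tb u t 1 x))
      + (av u t 1 x * fderiv ℝ (tb u t 0) x (e3 2) + fderiv ℝ (av u t 1) x (e3 2) * tb u t 0 x))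
      - (av u t 1 x * fderiv ℝ (tb u t 2) x (e3 0) + fderiv ℝ (av u t 1) x (e3 0) * tb u t 2 x))
      + (av u t 2 x * fderiv ℝ (tb u t 1) x (e3 0) + fderiv ℝ (av u t 2) x (e3 0) * tb u t 1 x)) :=
    j4.add (iPint 2 1 0)
  have hCB : (∫ x, (av u t 0 x * (fderiv ℝ (tb u t 2) x (e3 1) - fderiv ℝ (tb u t 1) x (e3 2))
      + av u t 1 x * (fderiv ℝ (tb u t 0) x (e3 2) - fderiv ℝ (tb u t 2) x (e3 0))
      + av u t 2 x * (fderiv ℝ (tb u t 1) x (e3 0) - fderiv ℝ (tb u t 0) x (e3 1))))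
      - (∫ x, (tb u t 0 x * wv u t 0 x + tb u t 1 x * wv u t 1 x + tb u t 2 x * wv u t 2 x))
      = 0 := by
    rw [← integral_sub iCint iBint]
    rw [funext hpoint]
    rw [integral_sub j5 (iPint 2 0 1), integral_add j4 (iPint 2 1 0),
      integral_sub j3 (iPint 1 2 0), integral_add j2 (iPint 1 0 2),
      integral_sub (iPint 0 2 1) (iPint 0 1 2)]
    rw [iZ 0 2 1, iZ 0 1 2, iZ 1 0 2, iZ 1 2 0, iZ 2 1 0, iZ 2 0 1]
    ring
  have hB := int_B_zero hu hh euler hR hsupp t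
  rw [hsplit, hB]
  linarith [hCB, hB]

include hu in
lemma hel_eq (t : ℝ) (x : E3) :
    (inner ℝ (u (t, x)) (curl3 (fun y => u (t, y)) x) : ℝ) = hel u t x := by
  have h1 : ∀ j : Fin 3, fderiv ℝ (fun y => u (t, y)) x (EuclideanSpace.single j 1)
      = fderiv ℝ u (t, x) (0, e3 j) := fun j => fderiv_slice (diff_u hu (t, x)) _
  unfold curl3
  rw [h1 0, h1 1, h1 2]
  simp only [PiLp.inner_apply, RCLike.inner_apply, conj_trivial, Fin.sum_univ_three]
  simp only [WithLp.equiv_symm_apply, PiLp.toLp_apply, Matrix.cons_val_zero, Matrix.cons_val_one,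
    Matrix.head_cons, Matrix.cons_val_two, Matrix.tail_cons]
  show _ = av u t 0 x * wv u t 0 x + av u t 1 x * wv u t 1 x + av u t 2 x * wv u t 2 x
  have hw0 : wv u t 0 x = da u t 2 1 x - da u t 1 2 x := rfl
  have hw1 : wv u t 1 x = da u t 0 2 x - da u t 2 0 x := rfl
  have hw2 : wv u t 2 x = da u t 1 0 x - da u t 0 1 x := rfl
  rw [hw0, hw1, hw2]
  simp only [av, da]
  ring

include hu in
lemma hasDerivAt_hel (t : ℝ) (x : E3) :
    HasDerivAt (fun τ => hel u τ x) (gker u t x) t := by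
  have hA : ∀ i : Fin 3, HasDerivAt (fun τ => av u τ i x) (tb u t i x) t := by
    intro i
    have h1 := hasDerivAt_slice (f := u) (diff_u hu (t, x))
    have h2 := (EuclideanSpace.proj (𝕜 := ℝ) i).hasFDerivAt.comp_hasDerivAt t h1
    exact h2
  have hDA : ∀ (i j : Fin 3), HasDerivAt (fun τ => da u τ i j x)
      (fderiv ℝ (tb u t i) x (e3 j)) t := by
    intro i j
    have h1 := hasDerivAt_Du_eval hu t x (0, e3 j)
    have h2 := (EuclideanSpace.proj (𝕜 := ℝ) i).hasFDerivAt.comp_hasDerivAt t h1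
    have h3 : fderiv ℝ (fderiv ℝ u) (t, x) (1, 0) (0, e3 j) i
        = fderiv ℝ (tb u t i) x (e3 j) := by
      rw [fderiv_tb hu, D2_symm hu (t, x) (0, e3 j) (1, 0)]
    rw [← h3]
    exact h2
  have hW0 : HasDerivAt (fun τ => wv u τ 0 x)
      (fderiv ℝ (tb u t 2) x (e3 1) - fderiv ℝ (tb u t 1) x (e3 2)) t :=
    (hDA 2 1).sub (hDA 1 2)
  have hW1 : HasDerivAt (fun τ => wv u τ 1 x)
      (fderiv ℝ (tb u t 0) x (e3 2) - fderiv ℝ (tb u t 2) x (e3 0)) t :=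
    (hDA 0 2).sub (hDA 2 0)
  have hW2 : HasDerivAt (fun τ => wv u τ 2 x)
      (fderiv ℝ (tb u t 1) x (e3 0) - fderiv ℝ (tb u t 0) x (e3 1)) t :=
    (hDA 1 0).sub (hDA 0 1)
  have H := (((hA 0).mul hW0).add ((hA 1).mul hW1)).add ((hA 2).mul hW2)
  have hval : gker u t x
      = (tb u t 0 x * wv u t 0 x
          + av u t 0 x * (fderiv ℝ (tb u t 2) x (e3 1) - fderiv ℝ (tb u t 1) x (e3 2))
        + (tb u t 1 x * wv u t 1 x
          + av u t 1 x * (fderiv ℝ (tb u t 0) x (e3 2) - fderiv ℝ (tb u t 2) x (e3 0)))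
        + (tb u t 2 x * wv u t 2 x
          + av u t 2 x * (fderiv ℝ (tb u t 1) x (e3 0) - fderiv ℝ (tb u t 0) x (e3 1)))) := by
    simp only [gker]; ring
  rw [hval]
  exact H


include hu in
lemma cont_hel_pair : Continuous (fun p : ℝ × E3 => hel u p.1 p.2) := by
  have c_av : ∀ i : Fin 3, Continuous (fun p : ℝ × E3 => u p i) := fun i =>
    (EuclideanSpace.proj (𝕜 := ℝ) i).continuous.comp hu.continuous
  have c_duv : ∀ (v : ℝ × E3) (i : Fin 3),
      Continuous (fun p : ℝ × E3 => fderiv ℝ u p v i) := fun v i =>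
    (EuclideanSpace.proj (𝕜 := ℝ) i).continuous.comp
      ((ContinuousLinearMap.apply ℝ E3 v).continuous.comp (cont_Du hu))
  show Continuous (fun p : ℝ × E3 =>
    u p 0 * (fderiv ℝ u p (0, e3 1) 2 - fderiv ℝ u p (0, e3 2) 1)
    + u p 1 * (fderiv ℝ u p (0, e3 2) 0 - fderiv ℝ u p (0, e3 0) 2)
    + u p 2 * (fderiv ℝ u p (0, e3 0) 1 - fderiv ℝ u p (0, e3 1) 0))
  exact (((c_av 0).mul ((c_duv (0, e3 1) 2).sub (c_duv (0, e3 2) 1))).add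
    ((c_av 1).mul ((c_duv (0, e3 2) 0).sub (c_duv (0, e3 0) 2)))).add
    ((c_av 2).mul ((c_duv (0, e3 0) 1).sub (c_duv (0, e3 1) 0)))

include hu in
lemma cont_gker_pair : Continuous (fun p : ℝ × E3 => gker u p.1 p.2) := by
  have c_av : ∀ i : Fin 3, Continuous (fun p : ℝ × E3 => u p i) := fun i =>
    (EuclideanSpace.proj (𝕜 := ℝ) i).continuous.comp hu.continuous
  have c_duv : ∀ (v : ℝ × E3) (i : Fin 3),
      Continuous (fun p : ℝ × E3 => fderiv ℝ u p v i) := fun v i =>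
    (EuclideanSpace.proj (𝕜 := ℝ) i).continuous.comp
      ((ContinuousLinearMap.apply ℝ E3 v).continuous.comp (cont_Du hu))
  have c_d2 : ∀ (v w : ℝ × E3) (i : Fin 3),
      Continuous (fun p : ℝ × E3 => fderiv ℝ (fderiv ℝ u) p v w i) := fun v w i =>
    (EuclideanSpace.proj (𝕜 := ℝ) i).continuous.comp
      ((ContinuousLinearMap.apply ℝ E3 w).continuous.comp
        ((ContinuousLinearMap.apply ℝ ((ℝ × E3) →L[ℝ] E3) v).continuous.comp (cont_D2u hu)))
  have hg : ∀ p : ℝ × E3, gker u p.1 p.2 =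
      (fderiv ℝ u p (1, 0) 0 * (fderiv ℝ u p (0, e3 1) 2 - fderiv ℝ u p (0, e3 2) 1)
        + fderiv ℝ u p (1, 0) 1 * (fderiv ℝ u p (0, e3 2) 0 - fderiv ℝ u p (0, e3 0) 2)
        + fderiv ℝ u p (1, 0) 2 * (fderiv ℝ u p (0, e3 0) 1 - fderiv ℝ u p (0, e3 1) 0))
      + (u p 0 * (fderiv ℝ (fderiv ℝ u) p (0, e3 1) (1, 0) 2
            - fderiv ℝ (fderiv ℝ u) p (0, e3 2) (1, 0) 1)
        + u p 1 * (fderiv ℝ (fderiv ℝ u) p (0, e3 2) (1, 0) 0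
            - fderiv ℝ (fderiv ℝ u) p (0, e3 0) (1, 0) 2)
        + u p 2 * (fderiv ℝ (fderiv ℝ u) p (0, e3 0) (1, 0) 1
            - fderiv ℝ (fderiv ℝ u) p (0, e3 1) (1, 0) 0)) := by
    intro p
    simp only [gker]
    rw [fderiv_tb hu, fderiv_tb hu, fderiv_tb hu, fderiv_tb hu, fderiv_tb hu, fderiv_tb hu]
    rfl
  refine Continuous.congr ?_ (fun p => (hg p).symm)
  have X1 := (c_duv (1,0) 0).mul ((c_duv (0, e3 1) 2).sub (c_duv (0, e3 2) 1))
  have X2 := (c_duv (1,0) 1).mul ((c_duv (0, e3 2) 0).sub (c_duv (0, e3 0) 2))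
  have X3 := (c_duv (1,0) 2).mul ((c_duv (0, e3 0) 1).sub (c_duv (0, e3 1) 0))
  have Y1 := (c_av 0).mul ((c_d2 (0, e3 1) (1,0) 2).sub (c_d2 (0, e3 2) (1,0) 1))
  have Y2 := (c_av 1).mul ((c_d2 (0, e3 2) (1,0) 0).sub (c_d2 (0, e3 0) (1,0) 2))
  have Y3 := (c_av 2).mul ((c_d2 (0, e3 0) (1,0) 1).sub (c_d2 (0, e3 1) (1,0) 0))
  exact ((X1.add X2).add X3).add ((Y1.add Y2).add Y3)

include hu hsupp in
lemma gker_vanish (t : ℝ) (x : E3) (hx : R < ‖x‖) : gker u t x = 0 := by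
  have h1 : fderiv ℝ u (t, x) = 0 := Du_vanish hu hsupp t x hx
  have htb : ∀ k : Fin 3, tb u t k x = 0 := by
    intro k; show fderiv ℝ u (t, x) (1, 0) k = 0; rw [h1]; rfl
  have hav : ∀ i : Fin 3, av u t i x = 0 := by
    intro i; show u (t, x) i = 0; rw [hsupp t x hx.le]; rfl
  simp only [gker, htb, hav]
  ring

include hsupp in
lemma hel_vanish (t : ℝ) (x : E3) (hx : R ≤ ‖x‖) : hel u t x = 0 := by
  have hav : ∀ i : Fin 3, av u t i x = 0 := by
    intro i; show u (t, x) i = 0; rw [hsupp t x hx]; rfl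
  simp only [hel, hav]
  ring

include hu hsupp in
lemma integrable_hel (t : ℝ) : Integrable (fun x => hel u t x) := by
  refine Continuous.integrable_of_hasCompactSupport ?_ ?_
  · exact (cont_hel_pair hu).comp (continuous_const.prodMk continuous_id)
  · exact hcs_of_vanish (R := R) (fun y hy => hel_vanish hsupp t y hy.le)

include hu hh euler hR hsupp in
lemma hasDerivAt_int_hel (t₀ : ℝ) :
    HasDerivAt (fun t => ∫ x, hel u t x) 0 t₀ := by
  have hK : IsCompact ((Set.Icc (t₀ - 1) (t₀ + 1)) ×ˢ Metric.closedBall (0 : E3) R) :=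
    isCompact_Icc.prod (isCompact_closedBall _ _)
  obtain ⟨M, hM⟩ := hK.exists_bound_of_continuousOn (cont_gker_pair hu).continuousOn
  have key := hasDerivAt_integral_of_dominated_loc_of_deriv_le (s := Metric.ball t₀ 1) (Metric.ball_mem_nhds t₀ one_pos)
    (F := fun t x => hel u t x) (F' := fun t x => gker u t x)
    (bound := (Metric.closedBall (0 : E3) R).indicator (fun _ => M))
    (x₀ := t₀) (μ := volume)
    ?_ ?_ ?_ ?_ ?_ ?_
  · have h2 := key.2
    rw [int_gker_zero hu hh euler hR hsupp t₀] at h2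
    exact h2
  · filter_upwards with t
    exact ((cont_hel_pair hu).comp (continuous_const.prodMk continuous_id)).aestronglyMeasurable
  · exact integrable_hel hu hsupp t₀
  · exact ((cont_gker_pair hu).comp
      (continuous_const.prodMk continuous_id)).aestronglyMeasurable
  · filter_upwards with x
    intro t ht
    rcases le_or_gt ‖x‖ R with hxR | hxR
    · have hxmem : x ∈ Metric.closedBall (0 : E3) R := by
        simpa [Metric.mem_closedBall, dist_zero_right] using hxR
      rw [Set.indicator_of_mem hxmem]
      have htmem : t ∈ Set.Icc (t₀ - 1) (t₀ + 1) := by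
        have := Metric.mem_ball.1 ht
        rw [Real.dist_eq] at this
        have := abs_lt.1 this
        constructor <;> linarith [this.1, this.2]
      exact hM (t, x) ⟨htmem, hxmem⟩
    · have hxmem : x ∉ Metric.closedBall (0 : E3) R := by
        simp [Metric.mem_closedBall, dist_zero_right, not_le, hxR]
      rw [Set.indicator_of_notMem hxmem, gker_vanish hu hsupp t x hxR]
      simp
  · rw [integrable_indicator_iff measurableSet_closedBall]
    exact integrableOn_const measure_closedBall_lt_top.ne
  · filter_upwards with x
    intro t _
    exact hasDerivAt_hel hu t x

end main


end

end HelicityAux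

/-- Helicity conservation in `ℝ³`: for compactly supported isentropic Euler flow,
the helicity `∫ ⟨u, curl u⟩ dx` is constant in time. -/
theorem helicity_conserved_R3
    (u : ℝ × EuclideanSpace ℝ (Fin 3) → EuclideanSpace ℝ (Fin 3))
    (hu : ContDiff ℝ (⊤ : ℕ∞) u)
    (h : ℝ × EuclideanSpace ℝ (Fin 3) → ℝ) (hh : ContDiff ℝ 1 h)
    (euler : ∀ (t : ℝ) (x : EuclideanSpace ℝ (Fin 3)),
      deriv (fun τ => u (τ, x)) t + fderiv ℝ (fun y => u (t, y)) x (u (t, x))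
        = -gradient (fun y => h (t, y)) x)
    (R : ℝ) (hR : 0 < R)
    (hsupp : ∀ (t : ℝ) (x : EuclideanSpace ℝ (Fin 3)), R ≤ ‖x‖ → u (t, x) = 0) :
    ∀ t₁ t₂ : ℝ,
      (∫ x : EuclideanSpace ℝ (Fin 3), ⟪u (t₁, x), curl3 (fun y => u (t₁, y)) x⟫)
        = ∫ x : EuclideanSpace ℝ (Fin 3), ⟪u (t₂, x), curl3 (fun y => u (t₂, y)) x⟫ := by
  intro t₁ t₂
  have hΦ : ∀ t : ℝ, HasDerivAt (fun t => ∫ x, HelicityAux.hel u t x) 0 t :=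
    fun t => HelicityAux.hasDerivAt_int_hel hu hh euler hR hsupp t
  have hconst := is_const_of_deriv_eq_zero (fun t => (hΦ t).differentiableAt)
    (fun t => (hΦ t).deriv) t₁ t₂
  have he : ∀ t : ℝ, (∫ x : EuclideanSpace ℝ (Fin 3), ⟪u (t, x), curl3 (fun y => u (t, y)) x⟫)
      = ∫ x, HelicityAux.hel u t x := by
    intro t
    congr 1
    funext x
    exact HelicityAux.hel_eq hu t x
  rw [he t₁, he t₂]
  exact hconst
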